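/- Let A be a parametric timed Büchi automaton and α an abstraction over its symbolic semantics ⟦A⟧ such that the induced transition system ⟦A⟧^α is finite. A parameter valuation v is contained in the set Accepted returned by the Cumulative NDFS algorithm run on ⟦A⟧^α if and only if there exists an accepting run respecting v in ⟦A⟧^α. -/

import Mathlib

namespace PTASynth

open Relation

variable {L P : Type} {n : ℕ} [Fintype P]

/-! ### Affine expressions over parameters -/

/-- Affine expressions `z₀ + z₁p₁ + … + zₘpₘ` with integer coefficients. -/
structure AffExpr (P : Type) where
  const : ℤ
  coef : P → ℤ

noncomputable def AffExpr.eval (e : AffExpr P) (v : P → ℤ) : ℤ :=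
  e.const + ∑ p, e.coef p * v p

instance : Add (AffExpr P) :=
  ⟨fun e f => ⟨e.const + f.const, fun p => e.coef p + f.coef p⟩⟩

def AffExpr.ofInt (z : ℤ) : AffExpr P := ⟨z, fun _ => 0⟩

open Classical in
noncomputable def AffExpr.var (p : P) : AffExpr P :=
  ⟨0, fun q => if q = p then 1 else 0⟩

/-- `max_{lb,ub}(e)`: replace positively occurring parameters by their upper bound and
negatively occurring ones by their lower bound. -/
noncomputable def AffExpr.maxVal (e : AffExpr P) (lb ub : P → ℤ) : ℤ :=
  e.const + ∑ p, (if 0 ≤ e.coef p then e.coef p * ub p else e.coef p * lb p)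

/-- Extended affine expressions: `none` denotes `∞`. -/
abbrev EExpr (P : Type) := Option (AffExpr P)

noncomputable def EExpr.eval (e : EExpr P) (v : P → ℤ) : WithTop ℤ :=
  match e with
  | none => ⊤
  | some e => (AffExpr.eval e v : WithTop ℤ)

def EExpr.add : EExpr P → EExpr P → EExpr P
  | some e, some f => some (e + f)
  | _, _ => none

/-! ### Parameter constraints -/

/-- Relation symbols for parameter constraints. -/
inductive CRel | lt | le | ge | gt
deriving DecidableEq

def CRel.holds : CRel → WithTop ℤ → WithTop ℤ → Prop
  | .lt, a, b => a < b
  | .le, a, b => a ≤ b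
  | .ge, a, b => b ≤ a
  | .gt, a, b => b < a

def CRel.negRel : CRel → CRel
  | .lt => .ge
  | .le => .gt
  | .ge => .lt
  | .gt => .le

/-- A parameter constraint `e ∼ e'`. -/
structure Constr (P : Type) where
  lhs : EExpr P
  rel : CRel
  rhs : EExpr P

def Constr.neg (c : Constr P) : Constr P := ⟨c.lhs, c.rel.negRel, c.rhs⟩

def Constr.sat (c : Constr P) (v : P → ℤ) : Prop :=
  c.rel.holds (EExpr.eval c.lhs v) (EExpr.eval c.rhs v)

/-- `⟦C⟧`: the set of parameter valuations satisfying a constraint set. -/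
def csem (C : Set (Constr P)) : Set (P → ℤ) :=
  {v | ∀ c ∈ C, c.sat v}

/-- `C ⊨ c`: the constraint `c` covers the constraint set `C`. -/
def Covers (C : Set (Constr P)) (c : Constr P) : Prop :=
  ∀ v ∈ csem C, c.sat v

/-! ### Clock valuations -/

/-- Clock valuations over clocks `Fin (n+1)`, clock `0` is the zero clock `x₀`. -/
structure ClockVal (n : ℕ) where
  val : Fin (n + 1) → ℝ
  zero_eq : val 0 = 0
  nonneg : ∀ x, 0 ≤ val x

def ClockVal.zeroVal (n : ℕ) : ClockVal n := ⟨fun _ => 0, rfl, fun _ => le_refl 0⟩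

open Classical in
/-- `η⟨R⟩`: reset the clocks in `R` to `0`. -/
noncomputable def ClockVal.reset (η : ClockVal n) (R : Set (Fin (n + 1))) : ClockVal n where
  val x := if x = 0 ∨ x ∈ R then 0 else η.val x
  zero_eq := by simp
  nonneg x := by
    try dsimp only
    split
    · exact le_rfl
    · exact η.nonneg x

/-! ### Guards -/

/-- A bound `(≺, e)` with `≺ ∈ {≤, <}` (`true` means `≤`) and `e ∈ E(P) ∪ {∞}`. -/
abbrev Bnd (P : Type) := Bool × EExpr P

def Bnd.sat (b : Bnd P) (v : P → ℤ) (r : ℝ) : Prop :=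
  match b.2 with
  | none => True
  | some e => if b.1 then r ≤ (AffExpr.eval e v : ℝ) else r < (AffExpr.eval e v : ℝ)

/-- An atomic guard `xᵢ - xⱼ ≺ e`. -/
structure Atom (n : ℕ) (P : Type) where
  i : Fin (n + 1)
  j : Fin (n + 1)
  le : Bool
  e : EExpr P

/-- A guard is a finite conjunction of atomic guards. -/
abbrev Guard (n : ℕ) (P : Type) := List (Atom n P)

def Atom.sat (a : Atom n P) (v : P → ℤ) (η : ClockVal n) : Prop :=
  Bnd.sat (a.le, a.e) v (η.val a.i - η.val a.j)

def Guard.sat (g : Guard n P) (v : P → ℤ) (η : ClockVal n) : Prop :=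
  ∀ a ∈ g, a.sat v η

/-- Simple guards: one of the compared clocks is the zero clock and the bound is finite. -/
def Atom.Simple (a : Atom n P) : Prop := (a.i = 0 ∨ a.j = 0) ∧ a.e ≠ none

def Guard.Simple (g : Guard n P) : Prop := ∀ a ∈ g, a.Simple

/-! ### Parametric timed (Büchi) automata -/

/-- A parametric timed automaton. -/
structure PTA (L : Type) (n : ℕ) (P : Type) where
  l0 : L
  trans : Set (L × Guard n P × Set (Fin (n + 1)) × L)
  Inv : L → Guard n P
  simple_trans : ∀ t ∈ trans, Guard.Simple t.2.1
  simple_Inv : ∀ l, Guard.Simple (Inv l)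

/-- A parametric timed Büchi automaton. -/
structure PTBA (L : Type) (n : ℕ) (P : Type) extends PTA L n P where
  F : Set L

/-! ### Concrete semantics `⟦A⟧_v` -/

abbrev CState (L : Type) (n : ℕ) := L × ClockVal n

/-- Delay transition `(l,η) →^d (l,η+d)`. -/
def DelayStep (M : PTA L n P) (v : P → ℤ) (s : CState L n) (d : ℝ) (s' : CState L n) : Prop :=
  s'.1 = s.1 ∧ 0 ≤ d ∧ (∀ x : Fin (n + 1), x ≠ 0 → s'.2.val x = s.2.val x + d) ∧
    Guard.sat (M.Inv s'.1) v s'.2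

/-- Action transition `(l,η) →^act (l',η⟨R⟩)`. -/
def ActStep (M : PTA L n P) (v : P → ℤ) (s s' : CState L n) : Prop :=
  ∃ g R, (s.1, g, R, s'.1) ∈ M.trans ∧ Guard.sat g v s.2 ∧
    s'.2 = s.2.reset R ∧ Guard.sat (M.Inv s'.1) v s'.2

/-- `s →^{act}_d s'`: an action transition followed by a delay transition. -/
def ActD (M : PTA L n P) (v : P → ℤ) (s s' : CState L n) : Prop :=
  ∃ s'' d, ActStep M v s s'' ∧ DelayStep M v s'' d s'

/-- `s →^{act₁,…,act_k}_d s'`: composition of `→^{act}_d` steps where each step is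
labelled by the location of its source state. -/
def ActDSeq (M : PTA L n P) (v : P → ℤ) : List L → CState L n → CState L n → Prop
  | [], s, s' => s = s'
  | l :: ls, s, s' => ∃ s'', s.1 = l ∧ ActD M v s s'' ∧ ActDSeq M v ls s'' s'

/-- `s (→^{act₁,…,act_k}_d)* s'`: one or more iterations of `→^{act₁,…,act_k}_d`. -/
def ActDSeqPlus (M : PTA L n P) (v : P → ℤ) (acts : List L) :
    CState L n → CState L n → Prop :=
  TransGen (ActDSeq M v acts)

/-! ### Time-abstracting simulations -/

def IsTASim (M : PTA L n P) (v : P → ℤ) (R : CState L n → CState L n → Prop) : Prop :=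
  (∀ s1 s2 s1', R s1 s2 → ActStep M v s1 s1' →
      ∃ s2', ActStep M v s2 s2' ∧ R s1' s2') ∧
  (∀ s1 s2 s1' (d1 : ℝ), R s1 s2 → DelayStep M v s1 d1 s1' →
      ∃ d2 s2', DelayStep M v s2 d2 s2' ∧ R s1' s2')

def IsTABisim (M : PTA L n P) (v : P → ℤ) (R : CState L n → CState L n → Prop) : Prop :=
  IsTASim M v R ∧ IsTASim M v (flip R)

/-- `s ≼ s'`: some time-abstracting simulation relates `s` to `s'`. -/
def Sim (M : PTA L n P) (v : P → ℤ) (s s' : CState L n) : Prop :=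
  ∃ R, IsTASim M v R ∧ R s s'

/-! ### Runs of `⟦A⟧_v` -/

/-- A proper run: an infinite alternating sequence of delay and action transitions,
beginning with a delay, starting in the initial state. -/
def ProperRun (A : PTBA L n P) (v : P → ℤ) (s : ℕ → CState L n) (d : ℕ → ℝ) : Prop :=
  s 0 = (A.l0, ClockVal.zeroVal n) ∧
  ∀ i, ∃ s', DelayStep A.toPTA v (s i) (d i) s' ∧ ActStep A.toPTA v s' (s (i + 1))

def AcceptingRun (A : PTBA L n P) (v : P → ℤ) (s : ℕ → CState L n) (d : ℕ → ℝ) : Prop :=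
  ProperRun A v s d ∧ ∀ N, ∃ i, N ≤ i ∧ (s i).1 ∈ A.F

/-- A run is Zeno if the sum of all its delays is finite (bounded). -/
def ZenoD (d : ℕ → ℝ) : Prop := ∃ B : ℝ, ∀ N, ∑ i ∈ Finset.range N, d i ≤ B

def HasAccRun (A : PTBA L n P) (v : P → ℤ) : Prop := ∃ s d, AcceptingRun A v s d

/-- The PTBA has no Zeno accepting runs. -/
def NoZeno (A : PTBA L n P) : Prop :=
  ∀ (v : P → ℤ) s d, AcceptingRun A v s d → ¬ ZenoD d

/-! ### (Constrained) parametric difference bound matrices -/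

/-- A parametric difference bound matrix. -/
abbrev PDBM (n : ℕ) (P : Type) := Fin (n + 1) → Fin (n + 1) → Bnd P

/-- `⟦D⟧_v`. -/
def PDBM.sem (D : PDBM n P) (v : P → ℤ) : Set (ClockVal n) :=
  {η | ∀ i j, Bnd.sat (D i j) v (η.val i - η.val j)}

/-- A constrained PDBM `(C, D)`. -/
abbrev CPDBM (n : ℕ) (P : Type) := Set (Constr P) × PDBM n P

/-- `⟦C,D⟧ = {(v,η) | v ∈ ⟦C⟧ ∧ η ∈ ⟦D⟧_v}`. -/
def CPDBM.sem (cd : CPDBM n P) : Set ((P → ℤ) × ClockVal n) :=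
  {p | p.1 ∈ csem cd.1 ∧ p.2 ∈ PDBM.sem cd.2 p.1}

open Classical in
noncomputable def PDBM.upd (D : PDBM n P) (i j : Fin (n + 1)) (b : Bnd P) : PDBM n P :=
  fun i' j' => if i' = i ∧ j' = j then b else D i' j'

/-- The constraint `e_ij (≺_ij ⟹ ≺) e` used when applying the guard atom
`x_i - x_j ≺ e` to a PDBM. -/
def atomConstr (D : PDBM n P) (a : Atom n P) : Constr P :=
  ⟨(D a.i a.j).2, if !(D a.i a.j).1 || a.le then CRel.le else CRel.lt, a.e⟩

/-- Applying a guard atom to a constrained PDBM (possibly splitting the constraint set). -/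
inductive ApplyAtom : CPDBM n P → Atom n P → CPDBM n P → Prop
  | keep (C : Set (Constr P)) (D : PDBM n P) (a : Atom n P) :
      Covers C (atomConstr D a) → ApplyAtom (C, D) a (C, D)
  | repl (C : Set (Constr P)) (D : PDBM n P) (a : Atom n P) :
      Covers C (atomConstr D a).neg →
      ApplyAtom (C, D) a (C, PDBM.upd D a.i a.j (a.le, a.e))
  | splitKeep (C : Set (Constr P)) (D : PDBM n P) (a : Atom n P) :
      ¬ Covers C (atomConstr D a) → ¬ Covers C (atomConstr D a).neg →
      ApplyAtom (C, D) a (insert (atomConstr D a) C, D)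
  | splitRepl (C : Set (Constr P)) (D : PDBM n P) (a : Atom n P) :
      ¬ Covers C (atomConstr D a) → ¬ Covers C (atomConstr D a).neg →
      ApplyAtom (C, D) a (insert (atomConstr D a).neg C, PDBM.upd D a.i a.j (a.le, a.e))

/-- Applying a conjunction of guard atoms. -/
inductive ApplyGuard : CPDBM n P → Guard n P → CPDBM n P → Prop
  | nil (cd : CPDBM n P) : ApplyGuard cd [] cd
  | cons {cd cd' cd'' : CPDBM n P} {a : Atom n P} {g : Guard n P} :
      ApplyAtom cd a cd' → ApplyGuard cd' g cd'' → ApplyGuard cd (a :: g) cd''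

open Classical in
/-- `D⟨R⟩`: resetting a set of clocks. -/
noncomputable def PDBM.reset (D : PDBM n P) (R : Set (Fin (n + 1))) : PDBM n P :=
  fun i j =>
    if i = j then D i j
    else D (if i ∈ R then 0 else i) (if j ∈ R then 0 else j)

open Classical in
/-- `D↑`: the time successor (remove all upper bounds on clocks). -/
noncomputable def PDBM.up (D : PDBM n P) : PDBM n P :=
  fun i j => if i ≠ 0 ∧ j = 0 then ((false : Bool), (none : EExpr P)) else D i j

/-- The guard atom `x_i - x_j (≺_ik ∧ ≺_kj) (e_ik + e_kj)` used by the parametric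
Floyd–Warshall canonisation. -/
def fwAtom (D : PDBM n P) (k i j : Fin (n + 1)) : Atom n P :=
  ⟨i, j, (D i k).1 && (D k j).1, EExpr.add (D i k).2 (D k j).2⟩

/-- One step of the nondeterministic parametric Floyd–Warshall algorithm. -/
inductive FWStep : ℕ × ℕ × ℕ × CPDBM n P → ℕ × ℕ × ℕ × CPDBM n P → Prop
  | relax (k i j : Fin (n + 1)) (cd cd' : CPDBM n P) :
      ApplyAtom cd (fwAtom cd.2 k i j) cd' →
      FWStep ((k : ℕ), (i : ℕ), (j : ℕ), cd) ((k : ℕ), (i : ℕ), (j : ℕ) + 1, cd')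
  | nextI (k i : Fin (n + 1)) (cd : CPDBM n P) :
      FWStep ((k : ℕ), (i : ℕ), n + 1, cd) ((k : ℕ), (i : ℕ) + 1, 0, cd)
  | nextK (k : Fin (n + 1)) (cd : CPDBM n P) :
      FWStep ((k : ℕ), n + 1, 0, cd) ((k : ℕ) + 1, 0, 0, cd)

/-- `(C',D') ∈ (C,D)_c`: membership in the canonical set. -/
def Canon (cd cd' : CPDBM n P) : Prop :=
  ReflTransGen FWStep (0, 0, 0, cd) (n + 1, 0, 0, cd')

/-! ### Symbolic semantics `⟦A⟧` -/

abbrev SymState (L : Type) (n : ℕ) (P : Type) := L × CPDBM n P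

/-- The symbolic transition relation `⟹` of `⟦A⟧`. -/
def SymStep (A : PTBA L n P) (S S' : SymState L n P) : Prop :=
  ∃ g R, (S.1, g, R, S'.1) ∈ A.trans ∧
    ∃ cd1 cd2 cd3, ApplyGuard S.2 g cd1 ∧ Canon cd1 cd2 ∧
      ApplyGuard (cd2.1, PDBM.up (PDBM.reset cd2.2 R)) (A.Inv S'.1) cd3 ∧ Canon cd3 S'.2

/-- The constraints `lb(p) ≤ p ≤ ub(p)` for all parameters `p`. -/
noncomputable def boundC (lb ub : P → ℤ) : Set (Constr P) :=
  {c | ∃ p : P, c = ⟨some (AffExpr.var p), CRel.ge, some (AffExpr.ofInt (lb p))⟩ ∨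
                c = ⟨some (AffExpr.var p), CRel.le, some (AffExpr.ofInt (ub p))⟩}

/-- The PDBM with all entries `(0, ≤)`. -/
def E0 (n : ℕ) (P : Type) : PDBM n P := fun _ _ => ((true : Bool), some (AffExpr.ofInt 0))

/-- The initial symbolic states of `⟦A⟧`. -/
def SymInit (A : PTBA L n P) (lb ub : P → ℤ) : Set (SymState L n P) :=
  {S | S.1 = A.l0 ∧ ApplyGuard (boundC lb ub, PDBM.up (E0 n P)) (A.Inv A.l0) S.2}

/-- The (reachable) symbolic states of `⟦A⟧`. -/
def SymStates (A : PTBA L n P) (lb ub : P → ℤ) : Set (SymState L n P) :=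
  {S | ∃ S0 ∈ SymInit A lb ub, ReflTransGen (SymStep A) S0 S}

/-- `s ∈_v S`: the concrete state `s` is contained in the symbolic state `S` under `v`. -/
def InV (v : P → ℤ) (s : CState L n) (S : SymState L n P) : Prop :=
  s.1 = S.1 ∧ v ∈ csem S.2.1 ∧ s.2 ∈ PDBM.sem S.2.2 v

/-! ### Abstractions -/

abbrev Abstr (L : Type) (n : ℕ) (P : Type) := SymState L n P → Set (SymState L n P)

/-- `α` is an abstraction over `⟦A⟧`. -/
def IsAbstraction (A : PTBA L n P) (α : Abstr L n P) : Prop :=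
  (∀ S Q, Q ∈ α S → Q.1 = S.1 ∧ csem Q.2.1 ⊆ csem S.2.1 ∧
      CPDBM.sem (Q.2.1, S.2.2) ⊆ CPDBM.sem Q.2) ∧
  (∀ S Q, Q ∈ α S → ∀ (v : P → ℤ) (s : CState L n), InV v s Q →
      ∃ s', InV v s' S ∧ Sim A.toPTA v s s')

/-- The transition relation `⟹^α` of the induced transition system `⟦A⟧^α`. -/
def AbsStep (A : PTBA L n P) (α : Abstr L n P) (Q Q' : SymState L n P) : Prop :=
  ∃ S, SymStep A Q S ∧ Q' ∈ α S

/-- The initial states of `⟦A⟧^α`. -/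
def AbsInit (A : PTBA L n P) (lb ub : P → ℤ) (α : Abstr L n P) : Set (SymState L n P) :=
  {Q | ∃ S ∈ SymInit A lb ub, Q ∈ α S}

/-- The states of `⟦A⟧^α`. -/
def AbsStates (A : PTBA L n P) (lb ub : P → ℤ) (α : Abstr L n P) : Set (SymState L n P) :=
  {Q | ∃ Q0 ∈ AbsInit A lb ub α, ReflTransGen (AbsStep A α) Q0 Q}

/-- The semantic content `(l, ⟦C⟧, ⟦C,D⟧)` of a symbolic state. -/
def semClass (Q : SymState L n P) : L × Set (P → ℤ) × Set ((P → ℤ) × ClockVal n) :=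
  (Q.1, csem Q.2.1, CPDBM.sem Q.2)

/-- `α` is a finite abstraction: the induced state space is finite (up to semantics). -/
def FiniteAbs (A : PTBA L n P) (lb ub : P → ℤ) (α : Abstr L n P) : Prop :=
  (semClass '' AbsStates A lb ub α).Finite

/-- There is an accepting run of `⟦A⟧^α` respecting `v`. -/
def AbsAccRun (A : PTBA L n P) (lb ub : P → ℤ) (α : Abstr L n P) (v : P → ℤ) : Prop :=
  ∃ ρ : ℕ → SymState L n P, ρ 0 ∈ AbsInit A lb ub α ∧
    (∀ i, AbsStep A α (ρ i) (ρ (i + 1))) ∧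
    (∀ i, v ∈ csem (ρ i).2.1) ∧
    (∀ N, ∃ i, N ≤ i ∧ (ρ i).1 ∈ A.F)

/-- `Q ⟹^α … ⟹^α Q'` via transitions labelled by the locations of their source states. -/
def AbsSeq (A : PTBA L n P) (α : Abstr L n P) :
    List L → SymState L n P → SymState L n P → Prop
  | [], Q, Q' => Q = Q'
  | l :: ls, Q, Q'' => ∃ Q', Q.1 = l ∧ AbsStep A α Q Q' ∧ AbsSeq A α ls Q' Q''

/-! ### The pk-extrapolation -/

def guardsOf (A : PTBA L n P) : Set (Guard n P) :=
  {g | (∃ t ∈ A.trans, t.2.1 = g) ∨ (∃ l, A.Inv l = g)}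

/-- The affine expressions compared with the clock `x` in a guard or invariant of `A`. -/
def comparedWith (A : PTBA L n P) (x : Fin (n + 1)) : Set (AffExpr P) :=
  {e | ∃ g ∈ guardsOf A, ∃ a ∈ g, (a.i = x ∨ a.j = x) ∧ a.e = some e}

/-- `M(x)`: the maximal constant with which the clock `x` is compared. -/
noncomputable def Mmax (A : PTBA L n P) (lb ub : P → ℤ) (x : Fin (n + 1)) : ℤ :=
  sSup ((fun e => AffExpr.maxVal e lb ub) '' comparedWith A x)

/-- The four possible ways the pk-extrapolation treats the entry `(i,j)` with maximal
constants `Mi = M(x_i)` and `Mj = M(x_j)`. -/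
def PkEntry (Mi Mj : ℤ) (old new : Bnd P) (c : Constr P) : Prop :=
  (new = old ∧ c = ⟨old.2, CRel.le, some (AffExpr.ofInt Mi)⟩) ∨
  (new = ((false : Bool), (none : EExpr P)) ∧ c = ⟨old.2, CRel.gt, some (AffExpr.ofInt Mi)⟩) ∨
  (new = old ∧ c = ⟨old.2, CRel.ge, some (AffExpr.ofInt (-Mj))⟩) ∨
  (new = ((false : Bool), some (AffExpr.ofInt (-Mj))) ∧
    c = ⟨old.2, CRel.lt, some (AffExpr.ofInt (-Mj))⟩)

/-- The pk-extrapolation `α_pk`. -/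
noncomputable def pkExtra (A : PTBA L n P) (lb ub : P → ℤ) : Abstr L n P :=
  fun S => {Q | Q.1 = S.1 ∧
    ∃ f : Fin (n + 1) → Fin (n + 1) → Bnd P × Constr P,
      (∀ i j, PkEntry (Mmax A lb ub i) (Mmax A lb ub j) (S.2.2 i j) (f i j).1 (f i j).2) ∧
      (∀ i j, Q.2.2 i j = (f i j).1) ∧
      Q.2.1 = S.2.1 ∪ {c | ∃ i j, c = (f i j).2}}

/-! ### Region equivalence -/

/-- The maximal constant to which the clock `x` is compared in `A|v`. -/
noncomputable def cmax (A : PTBA L n P) (v : P → ℤ) (x : Fin (n + 1)) : ℤ :=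
  sSup ((fun e => AffExpr.eval e v) '' comparedWith A x)

/-- The standard region equivalence `≡_{A|v}` on the states of `⟦A⟧_v`. -/
def RegionEquiv (A : PTBA L n P) (v : P → ℤ) (s s' : CState L n) : Prop :=
  s.1 = s'.1 ∧
  (∀ x : Fin (n + 1),
      ((cmax A v x : ℝ) < s.2.val x ∧ (cmax A v x : ℝ) < s'.2.val x) ∨
      (⌊s.2.val x⌋ = ⌊s'.2.val x⌋ ∧ (Int.fract (s.2.val x) = 0 ↔ Int.fract (s'.2.val x) = 0))) ∧
  (∀ x y : Fin (n + 1),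
      s.2.val x ≤ (cmax A v x : ℝ) → s.2.val y ≤ (cmax A v y : ℝ) →
      (Int.fract (s.2.val x) ≤ Int.fract (s.2.val y) ↔
        Int.fract (s'.2.val x) ≤ Int.fract (s'.2.val y)))

/-! ### The Cumulative NDFS algorithm -/

variable {S V : Type}

/-- A finite Büchi graph whose states carry monotone sets of parameter valuations. -/
structure NGraph (S V : Type) where
  succ : S → List S
  init : S
  acc : S → Prop
  C : S → Set V
  mono : ∀ s s', s' ∈ succ s → C s' ⊆ C s

/-- Control frames of the Cumulative NDFS machine. -/
inductive NFrame (S : Type)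
  | callOuter (s : S)
  | outer (s : S) (rest : List S)
  | outerPop (s : S)
  | callInner (s : S)
  | inner (s : S) (rest : List S)

/-- Configurations of the Cumulative NDFS machine. -/
structure NConfig (S V : Type) where
  found : Set V
  outer : Set S
  inner : Set S
  stack : Set S
  ctrl : List (NFrame S)

/-- Small-step semantics of the Cumulative NDFS algorithm. -/
inductive NStep (G : NGraph S V) : NConfig S V → NConfig S V → Prop
  | callOuter (F O I St s k) :
      NStep G ⟨F, O, I, St, .callOuter s :: k⟩
              ⟨F, insert s O, I, insert s St, .outer s (G.succ s) :: k⟩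
  | outerSkip (F O I St s s' rest k) :
      (s' ∈ O ∨ s' ∈ St ∨ G.C s' ⊆ F) →
      NStep G ⟨F, O, I, St, .outer s (s' :: rest) :: k⟩
              ⟨F, O, I, St, .outer s rest :: k⟩
  | outerRec (F O I St s s' rest k) :
      s' ∉ O → s' ∉ St → ¬ G.C s' ⊆ F →
      NStep G ⟨F, O, I, St, .outer s (s' :: rest) :: k⟩
              ⟨F, O, I, St, .callOuter s' :: .outer s rest :: k⟩
  | outerAcc (F O I St s k) :
      G.acc s → ¬ G.C s ⊆ F →
      NStep G ⟨F, O, I, St, .outer s [] :: k⟩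
              ⟨F, O, I, St, .callInner s :: .outerPop s :: k⟩
  | outerDone (F O I St s k) :
      ¬ (G.acc s ∧ ¬ G.C s ⊆ F) →
      NStep G ⟨F, O, I, St, .outer s [] :: k⟩ ⟨F, O, I, St \ {s}, k⟩
  | outerPop (F O I St s k) :
      NStep G ⟨F, O, I, St, .outerPop s :: k⟩ ⟨F, O, I, St \ {s}, k⟩
  | callInner (F O I St s k) :
      NStep G ⟨F, O, I, St, .callInner s :: k⟩
              ⟨F, O, insert s I, St, .inner s (G.succ s) :: k⟩
  | innerFound (F O I St s s' rest k) :
      s' ∈ St →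
      NStep G ⟨F, O, I, St, .inner s (s' :: rest) :: k⟩ ⟨F ∪ G.C s', O, I, St, k⟩
  | innerRec (F O I St s s' rest k) :
      s' ∉ St → s' ∉ I → ¬ G.C s' ⊆ F →
      NStep G ⟨F, O, I, St, .inner s (s' :: rest) :: k⟩
              ⟨F, O, I, St, .callInner s' :: .inner s rest :: k⟩
  | innerSkip (F O I St s s' rest k) :
      s' ∉ St → (s' ∈ I ∨ G.C s' ⊆ F) →
      NStep G ⟨F, O, I, St, .inner s (s' :: rest) :: k⟩ ⟨F, O, I, St, .inner s rest :: k⟩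
  | innerDone (F O I St s k) :
      NStep G ⟨F, O, I, St, .inner s [] :: k⟩ ⟨F, O, I, St, k⟩

/-- The initial configuration of the Cumulative NDFS algorithm. -/
def initConfig (G : NGraph S V) : NConfig S V := ⟨∅, ∅, ∅, ∅, [.callOuter G.init]⟩

/-- The edge relation of the graph. -/
def Edge (G : NGraph S V) (s s' : S) : Prop := s' ∈ G.succ s

/-- One edge of a cycle under the valuation `v`: both endpoints carry `v`. -/
def StepUnder (G : NGraph S V) (v : V) (s s' : S) : Prop :=
  s' ∈ G.succ s ∧ v ∈ G.C s ∧ v ∈ G.C s'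

/-- The step from `c` to `c'` backtracks (in `OuterDFS`) from the state `q`. -/
def Backtracks (G : NGraph S V) (q : S) (c c' : NConfig S V) : Prop :=
  NStep G c c' ∧
    ((∃ k, c.ctrl = NFrame.outer q [] :: k ∧ c'.ctrl = k) ∨
     (∃ k, c.ctrl = NFrame.outerPop q :: k))

/-!
Cumulative NDFS is proved correct by an invariant of its small-step semantics. Since `C` only
shrinks along edges, all states of a cycle carrying `v` carry `v`, and while `v ∉ Found` none of
them is pruned. The invariant says that every valuation in `Found` is carried by a reachable
accepting cycle, and that an accepting cycle through `a` carrying `v` is detected, or `a` is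
still to be explored, or `a` is the seed of the running nested search. When the nested search
from a seed `a` ends, every state it visited is closed (its successors are pruned or visited by
nested searches and off the stack), so a cycle back to `a`, which is on the stack, must have been
detected. At termination the stack is empty; if `v ∉ Found`, every reachable state carrying `v`
is visited and every such accepting one has been visited by a nested search, which leaves no
alternative for an accepting lasso carrying `v`. In the
finite system `⟦A⟧^α`, accepting lassos and accepting runs are the same by the pigeonhole
principle.
-/

section Chains

variable {σ : Type*} {R : σ → σ → Prop}

lemma exists_path_of_transGen {a b : σ} (h : TransGen R a b) :
    ∃ (m : ℕ) (f : ℕ → σ), 0 < m ∧ f 0 = a ∧ f m = b ∧ ∀ i < m, R (f i) (f (i + 1)) := by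
  induction h with
  | single hab => exact ⟨1, fun i => if i = 0 then a else _, one_pos, rfl, rfl, by simpa⟩
  | @tail b c _ hbc ih =>
    obtain ⟨m, f, hm, hf0, hfm, hf⟩ := ih
    refine ⟨m + 1, Function.update f (m + 1) c, m.succ_pos, by simp [hf0], by simp,
      fun i hi => ?_⟩
    rw [Function.update_of_ne (by omega)]
    rcases Nat.lt_succ_iff_lt_or_eq.1 hi with hi | rfl
    · rw [Function.update_of_ne (by omega)]
      exact hf i hi
    · simpa [hfm] using hbc

lemma exists_chain_of_transGen_self {a : σ} (h : TransGen R a a) :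
    ∃ ρ : ℕ → σ, ρ 0 = a ∧ (∀ i, R (ρ i) (ρ (i + 1))) ∧ ∀ N, ∃ i, N ≤ i ∧ ρ i = a := by
  obtain ⟨m, f, hm, hf0, hfm, hf⟩ := exists_path_of_transGen h
  refine ⟨fun i => f (i % m), by simp [hf0], fun i => ?_,
    fun N => ⟨N * m, Nat.le_mul_of_pos_right N hm, by simp [hf0]⟩⟩
  obtain ⟨q, r, hr, rfl⟩ : ∃ q r, r < m ∧ i = q * m + r :=
    ⟨i / m, i % m, Nat.mod_lt _ hm, by rw [Nat.div_add_mod']⟩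
  simp only [add_assoc, Nat.mul_add_mod_self_right, Nat.mod_eq_of_lt hr]
  rcases Nat.lt_or_ge (r + 1) m with hr' | hr'
  · rw [Nat.mod_eq_of_lt hr']
    exact hf r hr
  · obtain rfl : m = r + 1 := by omega
    rw [Nat.mod_self, hf0, ← hfm]
    exact hf r hr

lemma transGen_of_chain {ρ : ℕ → σ} (hρ : ∀ i, R (ρ i) (ρ (i + 1))) {i j : ℕ} (hij : i < j) :
    TransGen R (ρ i) (ρ j) := by
  induction j, hij using Nat.le_induction with
  | base => exact .single (hρ i)
  | succ j _ ih => exact ih.tail (hρ j)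

lemma reflTransGen_of_chain {ρ : ℕ → σ} (hρ : ∀ i, R (ρ i) (ρ (i + 1))) {i j : ℕ} (hij : i ≤ j) :
    ReflTransGen R (ρ i) (ρ j) := by
  rcases hij.lt_or_eq with hij | rfl
  · exact (transGen_of_chain hρ hij).to_reflTransGen
  · exact .refl

lemma exists_chain_of_lasso {x a : σ} (hxa : ReflTransGen R x a) (ha : TransGen R a a) :
    ∃ ρ : ℕ → σ, ρ 0 = x ∧ (∀ i, R (ρ i) (ρ (i + 1))) ∧ ∀ N, ∃ i, N ≤ i ∧ ρ i = a := by
  induction hxa using ReflTransGen.head_induction_on with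
  | refl => exact exists_chain_of_transGen_self ha
  | @head x y hxy _ ih =>
    obtain ⟨ρ, hρ0, hρ, hρa⟩ := ih
    refine ⟨fun | 0 => x | i + 1 => ρ i, rfl, fun i => ?_, fun N => ?_⟩
    · rcases i with _ | i
      · simpa [hρ0] using hxy
      · exact hρ i
    · obtain ⟨i, hi, hia⟩ := hρa N
      exact ⟨i + 1, by omega, hia⟩

lemma exists_lasso_of_chain {s : Set σ} (hs : s.Finite) {ρ : ℕ → σ} (hρs : ∀ i, ρ i ∈ s)
    (hρ : ∀ i, R (ρ i) (ρ (i + 1))) {p : σ → Prop} (hp : ∀ N, ∃ i, N ≤ i ∧ p (ρ i)) :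
    ∃ i, p (ρ i) ∧ TransGen R (ρ i) (ρ i) := by
  have hinf : {i | p (ρ i)}.Infinite := Set.infinite_of_forall_exists_gt fun N =>
    (hp (N + 1)).imp fun i hi => ⟨hi.2, by omega⟩
  obtain ⟨i, hi, j, hj, hij, hρij⟩ := hinf.exists_ne_map_eq_of_mapsTo (fun i _ => hρs i) hs
  rcases hij.lt_or_gt with hij | hij
  · exact ⟨i, hi, by simpa [hρij] using transGen_of_chain hρ hij⟩
  · exact ⟨j, hj, by simpa [hρij] using transGen_of_chain hρ hij⟩

end Chains

namespace NGraph

variable {G : NGraph S V}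

lemma C_subset_of_edge {s s' : S} (h : Edge G s s') : G.C s' ⊆ G.C s := G.mono s s' h

lemma C_subset_of_reflTransGen {s s' : S} (h : ReflTransGen (Edge G) s s') : G.C s' ⊆ G.C s := by
  induction h with
  | refl => exact subset_rfl
  | tail _ h ih => exact (C_subset_of_edge h).trans ih

variable (G) in
def AccLasso (v : V) : Prop :=
  ∃ a, ReflTransGen (Edge G) G.init a ∧ G.acc a ∧ v ∈ G.C a ∧ TransGen (Edge G) a a

variable (G) in
def AccRun (v : V) : Prop :=
  ∃ ρ : ℕ → S, ρ 0 = G.init ∧ (∀ i, Edge G (ρ i) (ρ (i + 1))) ∧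
    ∀ N, ∃ i, N ≤ i ∧ G.acc (ρ i) ∧ v ∈ G.C (ρ i)

lemma accLasso_iff_accRun (hfin : {s | ReflTransGen (Edge G) G.init s}.Finite) (v : V) :
    AccLasso G v ↔ AccRun G v := by
  constructor
  · rintro ⟨a, hreach, hacc, hva, hcyc⟩
    obtain ⟨ρ, hρ0, hρ, hρa⟩ := exists_chain_of_lasso hreach hcyc
    exact ⟨ρ, hρ0, hρ, fun N => (hρa N).imp fun i ⟨hi, hia⟩ => ⟨hi, hia ▸ hacc, hia ▸ hva⟩⟩
  · rintro ⟨ρ, hρ0, hρ, hρacc⟩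
    have hreach : ∀ i, ReflTransGen (Edge G) G.init (ρ i) :=
      fun i => hρ0 ▸ reflTransGen_of_chain hρ (Nat.zero_le i)
    obtain ⟨i, ⟨hacc, hv⟩, hcyc⟩ :=
      exists_lasso_of_chain (p := fun s => G.acc s ∧ v ∈ G.C s) hfin hreach hρ hρacc
    exact ⟨ρ i, hreach i, hacc, hv, hcyc⟩

end NGraph

section RootedGraph

variable {σ : Type} {G : NGraph (Option σ) V} {Init : Set σ} {R : σ → σ → Prop}
  {Acc : σ → Prop} {C : σ → Set V}

/-- `G` is the transition system `(Init, R)` with accepting states `Acc` and valuation sets `C`,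
made rooted by a fresh initial state `none` whose successors are the initial states. -/
structure IsRootedGraphOf (G : NGraph (Option σ) V) (Init : Set σ) (R : σ → σ → Prop)
    (Acc : σ → Prop) (C : σ → Set V) : Prop where
  init_eq : G.init = none
  succ_none : ∀ Q, some Q ∈ G.succ none ↔ Q ∈ Init
  succ_some : ∀ Q Q', some Q' ∈ G.succ (some Q) ↔ R Q Q'
  none_not_mem_succ : ∀ s, none ∉ G.succ s
  acc_some : ∀ Q, G.acc (some Q) ↔ Acc Q
  C_some : ∀ Q, G.C (some Q) = C Q

namespace IsRootedGraphOf

lemma reachable_subset (hG : IsRootedGraphOf G Init R Acc C) :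
    {s | ReflTransGen (Edge G) G.init s} ⊆
      insert none (some '' {Q | ∃ Q₀ ∈ Init, ReflTransGen R Q₀ Q}) := by
  intro s hs
  induction hs with
  | refl => exact .inl hG.init_eq
  | @tail s s' _ hss' ih =>
    obtain ⟨Q', rfl⟩ := Option.ne_none_iff_exists'.1 fun h => hG.none_not_mem_succ s (h ▸ hss')
    refine .inr ⟨Q', ?_, rfl⟩
    rcases ih with rfl | ⟨Q, ⟨Q₀, hQ₀, hQ₀Q⟩, rfl⟩
    · exact ⟨Q', (hG.succ_none Q').1 hss', .refl⟩
    · exact ⟨Q₀, hQ₀, hQ₀Q.tail ((hG.succ_some Q Q').1 hss')⟩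

lemma reachable_finite (hG : IsRootedGraphOf G Init R Acc C)
    (hfin : {Q | ∃ Q₀ ∈ Init, ReflTransGen R Q₀ Q}.Finite) :
    {s | ReflTransGen (Edge G) G.init s}.Finite :=
  ((hfin.image some).insert none).subset hG.reachable_subset

lemma accRun_iff (hG : IsRootedGraphOf G Init R Acc C) (v : V) :
    NGraph.AccRun G v ↔ ∃ ρ : ℕ → σ, ρ 0 ∈ Init ∧ (∀ i, R (ρ i) (ρ (i + 1))) ∧
      (∀ i, v ∈ C (ρ i)) ∧ ∀ N, ∃ i, N ≤ i ∧ Acc (ρ i) := by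
  constructor
  · rintro ⟨ρ, hρ0, hρ, hρacc⟩
    have hsome : ∀ i, ∃ Q, ρ (i + 1) = some Q := fun i =>
      Option.ne_none_iff_exists'.1 fun h => hG.none_not_mem_succ (ρ i) (h ▸ hρ i)
    choose ρ' hρ' using hsome
    refine ⟨ρ', ?_, fun i => ?_, fun i => ?_, fun N => ?_⟩
    · have h := hρ 0
      rw [hρ0, hG.init_eq, hρ'] at h
      exact (hG.succ_none _).1 h
    · have h := hρ (i + 1)
      rw [hρ', hρ'] at h
      exact (hG.succ_some _ _).1 h
    · obtain ⟨j, hij, -, hv⟩ := hρacc (i + 1)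
      rw [← hG.C_some, ← hρ']
      exact NGraph.C_subset_of_reflTransGen (reflTransGen_of_chain hρ hij) hv
    · obtain ⟨_ | j, hj, hacc, -⟩ := hρacc (N + 1)
      · omega
      · exact ⟨j, by omega, by simpa [hρ', hG.acc_some] using hacc⟩
  · rintro ⟨ρ, hρ0, hρ, hv, hacc⟩
    refine ⟨fun | 0 => none | i + 1 => some (ρ i), hG.init_eq.symm, fun i => ?_, fun N => ?_⟩
    · rcases i with _ | i
      · exact (hG.succ_none _).2 hρ0
      · exact (hG.succ_some _ _).2 (hρ i)
    · obtain ⟨i, hi, hacc⟩ := hacc N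
      exact ⟨i + 1, by omega, (hG.acc_some _).2 hacc, (hG.C_some _).symm ▸ hv i⟩

end IsRootedGraphOf

end RootedGraph

section CumulativeNDFS

def InnerActive (ctrl : List (NFrame S)) (r : S) : Prop := ∃ rest, NFrame.inner r rest ∈ ctrl

@[simp] lemma innerActive_cons {f : NFrame S} {k : List (NFrame S)} {r : S} :
    InnerActive (f :: k) r ↔ (∃ rest, f = .inner r rest) ∨ InnerActive k r := by
  simp only [InnerActive, List.mem_cons]
  grind

@[simp] lemma innerActive_append {k k' : List (NFrame S)} {r : S} :
    InnerActive (k ++ k') r ↔ InnerActive k r ∨ InnerActive k' r := by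
  simp only [InnerActive, List.mem_append]
  grind

variable (G : NGraph S V)

/-- `pending` is the successor whose `OuterDFS` call is about to start. -/
def OuterHandled (F : Set V) (O : Set S) (pending : Option S) (done : List S) : Prop :=
  ∀ s' ∈ done, (s' ∈ O ∨ G.C s' ⊆ F) ∨ pending = some s'

def InnerHandled (F : Set V) (I St : Set S) (pending : Option S) (done : List S) : Prop :=
  ∀ s' ∈ done, (s' ∉ St ∧ (s' ∈ I ∨ G.C s' ⊆ F)) ∨ pending = some s'

/-- A block `z` of `outer` frames: `top` is the state of its topmost frame and `St` the set of
states of its frames. -/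
inductive OuterZone (F : Set V) (O : Set S) :
    List (NFrame S) → Option S → Set S → Option S → Prop
  | nil (pending) : OuterZone F O [] none ∅ pending
  | cons {z top St} (s rest done pending) :
      OuterZone F O z top St none → (∀ t, top = some t → Edge G t s) →
      s ∈ O → s ∉ St → G.succ s = done ++ rest → OuterHandled G F O pending done →
      OuterZone F O (.outer s rest :: z) (some s) (insert s St) pending

/-- The `inner` frames of the nested search seeded at `a`; `t` is the state of the topmost one. -/
inductive InnerZone (F : Set V) (I St : Set S) (a : S) : List (NFrame S) → S → Option S → Prop
  | seed (rest done pending) :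
      G.succ a = done ++ rest → InnerHandled G F I St pending done →
      InnerZone F I St a [.inner a rest] a pending
  | cons {iz t} (s rest done pending) :
      InnerZone F I St a iz t none → Edge G t s → s ∈ I →
      G.succ s = done ++ rest → InnerHandled G F I St pending done →
      InnerZone F I St a (.inner s rest :: iz) s pending

/-- The possible shapes of the control stack.  While a nested search seeded at `a` runs, the
frames below it form the outer zone `.outer a [] :: k` of the finished outer search of `a`. -/
inductive Shaped (F : Set V) (O I St : Set S) : List (NFrame S) → Prop
  | outer {k top} : OuterZone G F O k top St none → Shaped F O I St k
  | callOuter {k top} (u) :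
      OuterZone G F O k top St (some u) → u ∉ O → u ∉ St →
      (∀ t, top = some t → Edge G t u) → (top = none → u = G.init) →
      Shaped F O I St (.callOuter u :: k)
  | callSeed {k} (a) :
      OuterZone G F O (.outer a [] :: k) (some a) St none → G.acc a → a ∉ I →
      Shaped F O I St (.callInner a :: .outerPop a :: k)
  | pop {k} (a) :
      OuterZone G F O (.outer a [] :: k) (some a) St none → G.acc a → a ∈ I →
      Shaped F O I St (.outerPop a :: k)
  | inner {k iz t} (a) :
      OuterZone G F O (.outer a [] :: k) (some a) St none → G.acc a → a ∈ I →
      InnerZone G F I St a iz t none →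
      Shaped F O I St (iz ++ .outerPop a :: k)
  | callInner {k iz t} (a u) :
      OuterZone G F O (.outer a [] :: k) (some a) St none → G.acc a → a ∈ I →
      InnerZone G F I St a iz t (some u) → Edge G t u → u ∉ I → u ∉ St → (u ∈ O ∨ G.C u ⊆ F) →
      Shaped F O I St (.callInner u :: (iz ++ .outerPop a :: k))

def InnerClosed (F : Set V) (I St : Set S) (r : S) : Prop :=
  G.C r ⊆ F ∨ ∀ s' ∈ G.succ r, G.C s' ⊆ F ∨ (s' ∈ I ∧ s' ∉ St)

structure Invariant (F : Set V) (O I St : Set S) (ctrl : List (NFrame S)) : Prop where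
  shaped : Shaped G F O I St ctrl
  reachable : ∀ s ∈ O, ReflTransGen (Edge G) G.init s
  init_mem : G.init ∈ O ∨ .callOuter G.init ∈ ctrl
  succ_of_finished : ∀ s ∈ O, s ∉ St → ∀ s' ∈ G.succ s, s' ∈ O ∨ G.C s' ⊆ F
  inner_of_finished : ∀ s ∈ O, s ∉ St → G.acc s → G.C s ⊆ F ∨ s ∈ I
  outer_of_inner : ∀ r ∈ I, r ∈ O ∨ G.C r ⊆ F
  seed_of_inner : ∀ r ∈ I, r ∈ St → G.C r ⊆ F ∨ .outerPop r ∈ ctrl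
  inner_closed : ∀ r ∈ I, ¬ InnerActive ctrl r → InnerClosed G F I St r
  found_sound : ∀ w ∈ F, NGraph.AccLasso G w
  /-- An accepting cycle carrying `v` is detected, or its state is still to be explored
  (it has not been a seed, and is unvisited or on the stack), or it is the current seed. -/
  acc_cycle : ∀ v a, G.acc a → v ∈ G.C a → TransGen (Edge G) a a →
    v ∈ F ∨ (a ∉ I ∧ (a ∉ O ∨ a ∈ St)) ∨ .outerPop a ∈ ctrl

variable {G} {F F' : Set V} {O I St : Set S} {z k iz : List (NFrame S)} {top : Option S}
  {p : Option S} {a s s' t u : S} {rest : List S}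

namespace OuterZone

lemma subset_outer (h : OuterZone G F O z top St p) : St ⊆ O := by
  induction h with
  | nil => exact Set.empty_subset _
  | cons s _ _ _ _ _ hs _ _ _ ih => exact Set.insert_subset hs ih

lemma top_eq (h : OuterZone G F O (.outer s rest :: z) top St p) : top = some s := by
  cases h
  rfl

lemma top_mem (h : OuterZone G F O z (some t) St p) : t ∈ St := by
  cases h
  exact Set.mem_insert _ _

lemma reflTransGen_top (h : OuterZone G F O z top St p) :
    ∀ x ∈ St, ∃ t, top = some t ∧ ReflTransGen (Edge G) x t := by
  induction h with
  | nil => simp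
  | cons s _ _ _ _ hedge _ _ _ _ ih =>
    rintro x (rfl | hx)
    · exact ⟨x, rfl, .refl⟩
    · obtain ⟨t, ht, hxt⟩ := ih x hx
      exact ⟨s, rfl, hxt.tail (hedge t ht)⟩

lemma mono (h : OuterZone G F O z top St p) (hF : F ⊆ F') {O' : Set S} (hO : O ⊆ O') :
    OuterZone G F' O' z top St p := by
  induction h with
  | nil => exact .nil _
  | cons s rest done p _ hedge hs hns hsucc hdone ih =>
    refine .cons s rest done p ih hedge (hO hs) hns hsucc fun x hx => ?_
    rcases hdone x hx with (hxO | hxF) | hx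
    · exact .inl (.inl (hO hxO))
    · exact .inl (.inr (hxF.trans hF))
    · exact .inr hx

lemma visit (h : OuterZone G F O z top St (some u)) : OuterZone G F (insert u O) z top St none := by
  cases h with
  | nil => exact .nil _
  | cons s rest done p hz hedge hs hns hsucc hdone =>
    refine .cons s rest done none (hz.mono subset_rfl (Set.subset_insert _ _)) hedge
      (Set.mem_insert_of_mem _ hs) hns hsucc fun x hx => .inl ?_
    rcases hdone x hx with (hxO | hxF) | hx
    · exact .inl (Set.mem_insert_of_mem _ hxO)
    · exact .inr hxF
    · exact .inl (by simp_all)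

lemma advance (h : OuterZone G F O (.outer s (s' :: rest) :: z) top St none)
    (hs' : (s' ∈ O ∨ G.C s' ⊆ F) ∨ p = some s') :
    OuterZone G F O (.outer s rest :: z) top St p := by
  cases h with
  | cons _ _ done _ hz hedge hs hns hsucc hdone =>
    refine .cons s rest (done ++ [s']) p hz hedge hs hns (by simp [hsucc]) fun x hx => ?_
    rcases List.mem_append.1 hx with hx | hx
    · exact .inl ((hdone x hx).resolve_right (by simp))
    · exact (List.mem_singleton.1 hx) ▸ hs'

lemma mem_succ (h : OuterZone G F O (.outer s (s' :: rest) :: z) top St p) : Edge G s s' := by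
  cases h with
  | cons _ _ _ _ _ _ _ _ hsucc => simp [Edge, hsucc]

lemma handled_succ (h : OuterZone G F O (.outer s [] :: z) top St p) :
    OuterHandled G F O p (G.succ s) := by
  cases h with
  | cons _ _ _ _ _ _ _ _ hsucc hdone => simpa [hsucc] using hdone

lemma forall_mem_outer (h : OuterZone G F O z top St p) :
    ∀ f ∈ z, ∃ s rest, f = .outer s rest := by
  induction h with
  | nil => simp
  | cons s rest _ _ _ _ _ _ _ _ ih =>
    intro f hf
    rcases List.mem_cons.1 hf with rfl | hf
    · exact ⟨s, rest, rfl⟩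
    · exact ih f hf

lemma outerPop_not_mem (h : OuterZone G F O z top St p) (b : S) : .outerPop b ∉ z := fun hb => by
  obtain ⟨_, _, hb⟩ := h.forall_mem_outer _ hb
  cases hb

lemma not_innerActive (h : OuterZone G F O z top St p) (r : S) : ¬ InnerActive z r :=
  fun ⟨_, hr⟩ => by
    obtain ⟨_, _, hr⟩ := h.forall_mem_outer _ hr
    cases hr

end OuterZone

namespace InnerZone

lemma exists_cons (h : InnerZone G F I St a iz t p) : ∃ rest iz', iz = .inner t rest :: iz' := by
  cases h <;> exact ⟨_, _, rfl⟩

lemma reflTransGen_top (h : InnerZone G F I St a iz t p) : ReflTransGen (Edge G) a t := by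
  induction h with
  | seed => exact .refl
  | cons _ _ _ _ _ hedge _ _ _ ih => exact ih.tail hedge

lemma top_mem (h : InnerZone G F I St a iz t p) (ha : a ∈ I) : t ∈ I := by
  cases h with
  | seed => exact ha
  | cons _ _ _ _ _ _ hs => exact hs

lemma mono (h : InnerZone G F I St a iz t p) (hF : F ⊆ F') {I' : Set S} (hI : I ⊆ I') :
    InnerZone G F' I' St a iz t p := by
  have handled : ∀ {p done}, InnerHandled G F I St p done → InnerHandled G F' I' St p done :=
    fun hdone x hx => (hdone x hx).imp_left fun ⟨hxSt, hx⟩ => ⟨hxSt, hx.imp (@hI x) hF.trans'⟩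
  induction h with
  | seed rest done p hsucc hdone => exact .seed rest done p hsucc (handled hdone)
  | cons s rest done p _ hedge hs hsucc hdone ih =>
    exact .cons s rest done p ih hedge (hI hs) hsucc (handled hdone)

lemma visit (h : InnerZone G F I St a iz t (some u)) (hu : u ∉ St) :
    InnerZone G F (insert u I) St a iz t none := by
  have handled : ∀ {done}, InnerHandled G F I St (some u) done →
      InnerHandled G F (insert u I) St none done := fun hdone x hx => by
    rcases hdone x hx with ⟨hxSt, hx⟩ | hx
    · exact .inl ⟨hxSt, hx.imp_left (Set.mem_insert_of_mem _)⟩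
    · cases hx
      exact .inl ⟨hu, .inl (Set.mem_insert _ _)⟩
  cases h with
  | seed rest done _ hsucc hdone => exact .seed rest done none hsucc (handled hdone)
  | cons _ rest done _ hz hedge hs hsucc hdone =>
    exact .cons _ rest done none (hz.mono subset_rfl (Set.subset_insert _ _)) hedge
      (Set.mem_insert_of_mem _ hs) hsucc (handled hdone)

lemma advance (h : InnerZone G F I St a (.inner s (s' :: rest) :: iz) t none)
    (hs' : (s' ∉ St ∧ (s' ∈ I ∨ G.C s' ⊆ F)) ∨ p = some s') :
    InnerZone G F I St a (.inner s rest :: iz) t p := by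
  have handled : ∀ {done}, InnerHandled G F I St none done →
      InnerHandled G F I St p (done ++ [s']) := fun hdone x hx => by
    rcases List.mem_append.1 hx with hx | hx
    · exact .inl ((hdone x hx).resolve_right (by simp))
    · exact (List.mem_singleton.1 hx) ▸ hs'
  cases h with
  | seed _ done _ hsucc hdone => exact .seed rest _ p (by simp [hsucc]) (handled hdone)
  | cons _ _ done _ hz hedge hs hsucc hdone =>
    exact .cons s rest _ p hz hedge hs (by simp [hsucc]) (handled hdone)

lemma mem_succ (h : InnerZone G F I St a (.inner s (s' :: rest) :: iz) t p) : Edge G s s' := by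
  cases h with
  | seed _ _ _ hsucc => simp [Edge, hsucc]
  | cons _ _ _ _ _ _ _ hsucc => simp [Edge, hsucc]

lemma handled_succ (h : InnerZone G F I St a (.inner s [] :: iz) t p) :
    InnerHandled G F I St p (G.succ s) := by
  cases h with
  | seed _ _ _ hsucc hdone => simpa [hsucc] using hdone
  | cons _ _ _ _ _ _ _ hsucc hdone => simpa [hsucc] using hdone

lemma outerPop_not_mem (h : InnerZone G F I St a iz t p) (b : S) : .outerPop b ∉ iz := by
  induction h with
  | seed => simp
  | cons _ _ _ _ _ _ _ _ _ ih => simpa using ih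

end InnerZone

namespace Shaped

lemma stack_eq_empty (h : Shaped G F O I St []) : St = ∅ := by
  generalize hc : ([] : List (NFrame S)) = ctrl at h
  cases h with
  | outer hz => cases hz with
    | nil => rfl
    | cons => simp at hc
  | inner _ _ _ _ hiz => obtain ⟨_, _, rfl⟩ := hiz.exists_cons; simp at hc
  | _ => simp at hc

lemma callOuter_inv (h : Shaped G F O I St (.callOuter u :: k)) :
    ∃ top, OuterZone G F O k top St (some u) ∧ u ∉ O ∧ u ∉ St ∧
      (∀ t, top = some t → Edge G t u) ∧ (top = none → u = G.init) := by
  generalize hc : NFrame.callOuter u :: k = ctrl at h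
  cases h with
  | outer hz => cases hz <;> simp at hc
  | callOuter u hz hu hus hedge hinit =>
    obtain ⟨⟨⟩, rfl⟩ := List.cons_eq_cons.1 hc
    exact ⟨_, hz, hu, hus, hedge, hinit⟩
  | inner _ _ _ _ hiz => obtain ⟨_, _, rfl⟩ := hiz.exists_cons; simp at hc
  | _ => simp at hc

lemma outer_inv (h : Shaped G F O I St (.outer s rest :: k)) :
    OuterZone G F O (.outer s rest :: k) (some s) St none := by
  generalize hc : NFrame.outer s rest :: k = ctrl at h
  cases h with
  | outer hz =>
    subst hc
    obtain rfl := hz.top_eq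
    exact hz
  | inner _ _ _ _ hiz => obtain ⟨_, _, rfl⟩ := hiz.exists_cons; simp at hc
  | _ => simp at hc

lemma outerPop_inv (h : Shaped G F O I St (.outerPop a :: k)) :
    OuterZone G F O (.outer a [] :: k) (some a) St none ∧ G.acc a ∧ a ∈ I := by
  generalize hc : NFrame.outerPop a :: k = ctrl at h
  cases h with
  | outer hz => cases hz <;> simp at hc
  | pop a hz hacc ha =>
    obtain ⟨⟨⟩, rfl⟩ := List.cons_eq_cons.1 hc
    exact ⟨hz, hacc, ha⟩
  | inner _ _ _ _ hiz => obtain ⟨_, _, rfl⟩ := hiz.exists_cons; simp at hc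
  | _ => simp at hc

lemma callInner_inv (h : Shaped G F O I St (.callInner u :: k)) :
    (∃ k', k = .outerPop u :: k' ∧ OuterZone G F O (.outer u [] :: k') (some u) St none ∧
      G.acc u ∧ u ∉ I) ∨
    (∃ a iz t k', k = iz ++ .outerPop a :: k' ∧
      OuterZone G F O (.outer a [] :: k') (some a) St none ∧ G.acc a ∧ a ∈ I ∧
      InnerZone G F I St a iz t (some u) ∧ Edge G t u ∧ u ∉ I ∧ u ∉ St ∧
      (u ∈ O ∨ G.C u ⊆ F)) := by
  generalize hc : NFrame.callInner u :: k = ctrl at h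
  cases h with
  | outer hz => cases hz <;> simp at hc
  | callSeed a hz hacc ha =>
    obtain ⟨⟨⟩, rfl⟩ := List.cons_eq_cons.1 hc
    exact .inl ⟨_, rfl, hz, hacc, ha⟩
  | callInner a u hz hacc ha hiz hedge hu hus huO =>
    obtain ⟨⟨⟩, rfl⟩ := List.cons_eq_cons.1 hc
    exact .inr ⟨a, _, _, _, rfl, hz, hacc, ha, hiz, hedge, hu, hus, huO⟩
  | inner _ _ _ _ hiz => obtain ⟨_, _, rfl⟩ := hiz.exists_cons; simp at hc
  | _ => simp at hc

lemma inner_inv (h : Shaped G F O I St (.inner s rest :: k)) :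
    ∃ a iz k', k = iz ++ .outerPop a :: k' ∧
      OuterZone G F O (.outer a [] :: k') (some a) St none ∧ G.acc a ∧ a ∈ I ∧
      InnerZone G F I St a (.inner s rest :: iz) s none := by
  generalize hc : NFrame.inner s rest :: k = ctrl at h
  cases h with
  | outer hz => cases hz <;> simp at hc
  | inner a hz hacc ha hiz =>
    obtain ⟨_, iz, rfl⟩ := hiz.exists_cons
    obtain ⟨⟨⟩, rfl⟩ := List.cons_eq_cons.1 (hc.trans (List.cons_append ..))
    exact ⟨a, iz, _, rfl, hz, hacc, ha, hiz⟩
  | _ => simp at hc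

lemma of_innerZone_cons (hz : OuterZone G F O (.outer a [] :: k) (some a) St none)
    (hacc : G.acc a) (ha : a ∈ I) (hiz : InnerZone G F I St a (.inner s rest :: iz) t p) :
    Shaped G F O I St (iz ++ .outerPop a :: k) := by
  cases hiz with
  | seed => exact .pop a hz hacc ha
  | cons _ _ _ _ hiz' => exact .inner a hz hacc ha hiz'

end Shaped

lemma InnerClosed.mono {r : S} (h : InnerClosed G F I St r) (hF : F ⊆ F') {I' : Set S}
    (hI : I ⊆ I') : InnerClosed G F' I' St r :=
  h.imp hF.trans' fun h s' hs' => (h s' hs').imp hF.trans' (.imp_left (@hI s'))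

/-- Once every state of `I` is closed, an accepting cycle through a seed `a ∈ I ∩ St` carrying
`v` is detected: otherwise the cycle would stay inside `I \ St` and never return to `a`. -/
lemma mem_of_transGen_self_of_innerClosed (hclosed : ∀ r ∈ I, InnerClosed G F I St r)
    (ha : a ∈ I) (haSt : a ∈ St) {v : V} (hva : v ∈ G.C a) (hcyc : TransGen (Edge G) a a) :
    v ∈ F := by
  by_contra hvF
  have step : ∀ x y, x ∈ I → Edge G x y → ReflTransGen (Edge G) y a → y ∈ I ∧ y ∉ St := by
    intro x y hx hxy hya
    have hvy : v ∈ G.C y := NGraph.C_subset_of_reflTransGen hya hva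
    rcases hclosed x hx with hxF | hsucc
    · exact absurd (hxF (NGraph.C_subset_of_edge hxy hvy)) hvF
    · exact (hsucc y hxy).resolve_left fun hyF => hvF (hyF hvy)
  have walk : ∀ y, ReflTransGen (Edge G) y a → y ∈ I → y ∉ St → False := by
    intro y hya
    induction hya using ReflTransGen.head_induction_on with
    | refl => exact fun _ h => h haSt
    | head hyz hza ih => exact fun hy _ => ih (step _ _ hy hyz hza).1 (step _ _ hy hyz hza).2
  obtain ⟨y, hay, hya⟩ := TransGen.head'_iff.1 hcyc
  exact walk y hya (step a y ha hay hya).1 (step a y ha hay hya).2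

namespace Invariant

variable {ctrl ctrl' : List (NFrame S)}

lemma initial : Invariant G ∅ ∅ ∅ ∅ [.callOuter G.init] where
  shaped := .callOuter G.init (.nil _) (Set.notMem_empty _) (Set.notMem_empty _) (by simp)
    fun _ => rfl
  reachable := by simp
  init_mem := by simp
  succ_of_finished := by simp
  inner_of_finished := by simp
  outer_of_inner := by simp
  seed_of_inner := by simp
  inner_closed := by simp
  found_sound := by simp
  acc_cycle _ a _ _ _ := .inr (.inl ⟨Set.notMem_empty a, .inl (Set.notMem_empty a)⟩)

lemma of_ctrl (inv : Invariant G F O I St ctrl) (hF : F ⊆ F') (hshaped : Shaped G F' O I St ctrl')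
    (hsound : ∀ w ∈ F', NGraph.AccLasso G w)
    (hinit : .callOuter G.init ∈ ctrl → .callOuter G.init ∈ ctrl' := by simp +contextual)
    (hpop : ∀ b, .outerPop b ∈ ctrl → .outerPop b ∈ ctrl' := by simp +contextual)
    (hinner : ∀ r ∈ I, InnerActive ctrl r → InnerActive ctrl' r ∨ InnerClosed G F' I St r := by
      simp +contextual) :
    Invariant G F' O I St ctrl' where
  shaped := hshaped
  reachable := inv.reachable
  init_mem := inv.init_mem.imp_right hinit
  succ_of_finished s hs hsSt s' hs' := (inv.succ_of_finished s hs hsSt s' hs').imp_right hF.trans'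
  inner_of_finished s hs hsSt hacc := (inv.inner_of_finished s hs hsSt hacc).imp_left hF.trans'
  outer_of_inner r hr := (inv.outer_of_inner r hr).imp_right hF.trans'
  seed_of_inner r hr hrSt := (inv.seed_of_inner r hr hrSt).imp hF.trans' (hpop r)
  inner_closed r hr hna := by
    by_cases hact : InnerActive ctrl r
    · exact (hinner r hr hact).resolve_left hna
    · exact (inv.inner_closed r hr hact).mono hF subset_rfl
  found_sound := hsound
  acc_cycle v a hacc hva hcyc :=
    (inv.acc_cycle v a hacc hva hcyc).imp (@hF v) (.imp_right (hpop a))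

lemma outerSkip (inv : Invariant G F O I St (.outer s (s' :: rest) :: k))
    (hs' : s' ∈ O ∨ s' ∈ St ∨ G.C s' ⊆ F) : Invariant G F O I St (.outer s rest :: k) := by
  have hz := inv.shaped.outer_inv
  have hs'O : s' ∈ O ∨ G.C s' ⊆ F := by
    rcases hs' with hs' | hs' | hs'
    exacts [.inl hs', .inl (hz.subset_outer hs'), .inr hs']
  exact inv.of_ctrl subset_rfl (.outer (hz.advance (.inl hs'O))) inv.found_sound

lemma outerRec (inv : Invariant G F O I St (.outer s (s' :: rest) :: k))
    (hs'O : s' ∉ O) (hs'St : s' ∉ St) :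
    Invariant G F O I St (.callOuter s' :: .outer s rest :: k) := by
  have hz := inv.shaped.outer_inv
  have hedge := hz.mem_succ
  exact inv.of_ctrl subset_rfl
    (.callOuter s' (hz.advance (.inr rfl)) hs'O hs'St (by simpa using hedge) (by simp))
    inv.found_sound

lemma outerAcc (inv : Invariant G F O I St (.outer s [] :: k)) (hacc : G.acc s)
    (hsF : ¬ G.C s ⊆ F) : Invariant G F O I St (.callInner s :: .outerPop s :: k) := by
  have hz := inv.shaped.outer_inv
  have hsI : s ∉ I := fun hsI => by
    rcases inv.seed_of_inner s hsI hz.top_mem with h | h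
    · exact hsF h
    · exact hz.outerPop_not_mem s h
  exact inv.of_ctrl subset_rfl (.callSeed s hz hacc hsI) inv.found_sound

lemma innerSkip (inv : Invariant G F O I St (.inner s (s' :: rest) :: k)) (hs'St : s' ∉ St)
    (hs' : s' ∈ I ∨ G.C s' ⊆ F) : Invariant G F O I St (.inner s rest :: k) := by
  obtain ⟨a, iz, k', rfl, hz, hacc, ha, hiz⟩ := inv.shaped.inner_inv
  exact inv.of_ctrl subset_rfl (.inner a hz hacc ha (hiz.advance (.inl ⟨hs'St, hs'⟩)))
    inv.found_sound

/-- The state `s` of the current inner frame is pruned, or finished in the outer search, or on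
the stack, and then it is the seed `a`, whose outer search has finished. -/
lemma succ_of_inner (inv : Invariant G F O I St (.inner s rest :: iz ++ .outerPop a :: k))
    (hz : OuterZone G F O (.outer a [] :: k) (some a) St none) (ha : a ∈ I)
    (hiz : InnerZone G F I St a (.inner s rest :: iz) s none) (hs' : Edge G s s') :
    s' ∈ O ∨ G.C s' ⊆ F := by
  have hsI := hiz.top_mem ha
  have of_pruned : G.C s ⊆ F → s' ∈ O ∨ G.C s' ⊆ F :=
    fun hsF => .inr ((NGraph.C_subset_of_edge hs').trans hsF)
  rcases inv.outer_of_inner s hsI with hsO | hsF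
  · by_cases hsSt : s ∈ St
    · rcases inv.seed_of_inner s hsI hsSt with hsF | hpop
      · exact of_pruned hsF
      · obtain rfl : s = a := by
          rcases List.mem_append.1 hpop with h | h
          · exact absurd h (hiz.outerPop_not_mem s)
          rcases List.mem_cons.1 h with h | h
          · simpa using h
          · exact absurd (List.mem_cons_of_mem _ h) (hz.outerPop_not_mem s)
        exact (hz.handled_succ s' hs').resolve_right (by simp)
    · exact inv.succ_of_finished s hsO hsSt s' hs'
  · exact of_pruned hsF

lemma innerRec (inv : Invariant G F O I St (.inner s (s' :: rest) :: k)) (hs'St : s' ∉ St)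
    (hs'I : s' ∉ I) : Invariant G F O I St (.callInner s' :: .inner s rest :: k) := by
  obtain ⟨a, iz, k', rfl, hz, hacc, ha, hiz⟩ := inv.shaped.inner_inv
  have hedge := hiz.mem_succ
  exact inv.of_ctrl subset_rfl (.callInner a s' hz hacc ha (hiz.advance (.inr rfl)) hedge hs'I
      hs'St (inv.succ_of_inner hz ha hiz hedge))
    inv.found_sound

lemma innerDone (inv : Invariant G F O I St (.inner s [] :: k)) : Invariant G F O I St k := by
  obtain ⟨a, iz, k', rfl, hz, hacc, ha, hiz⟩ := inv.shaped.inner_inv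
  refine inv.of_ctrl subset_rfl (.of_innerZone_cons hz hacc ha hiz) inv.found_sound
    (hinner := fun r _ hr => ?_)
  rcases innerActive_cons.1 hr with ⟨_, ⟨⟩⟩ | hr
  · refine .inr (.inr fun s' hs' => ?_)
    rcases hiz.handled_succ s' hs' with ⟨hs'St, hs'I | hs'F⟩ | h
    exacts [.inr ⟨hs'I, hs'St⟩, .inl hs'F, by simp at h]
  · exact .inl hr

lemma innerFound (inv : Invariant G F O I St (.inner s (s' :: rest) :: k)) (hs'St : s' ∈ St) :
    Invariant G (F ∪ G.C s') O I St k := by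
  obtain ⟨a, iz, k', rfl, hz, hacc, ha, hiz⟩ := inv.shaped.inner_inv
  have has : ReflTransGen (Edge G) a s := hiz.reflTransGen_top
  have hss' : Edge G s s' := hiz.mem_succ
  -- `s'` lies on the stack below the seed `a`, so `a →* s → s' →* a` is a cycle
  have hs'a : ReflTransGen (Edge G) s' a := by
    obtain ⟨t, ht, hs't⟩ := hz.reflTransGen_top s' hs'St
    cases ht
    exact hs't
  have hCs : G.C s ⊆ G.C s' := (NGraph.C_subset_of_reflTransGen has).trans
    (NGraph.C_subset_of_reflTransGen hs'a)
  have hF : F ⊆ F ∪ G.C s' := Set.subset_union_left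
  refine inv.of_ctrl hF (.of_innerZone_cons (hz.mono hF subset_rfl) hacc ha
      (hiz.mono hF subset_rfl)) ?_ (hinner := fun r _ hr => ?_)
  · rintro w (hw | hw)
    · exact inv.found_sound w hw
    · exact ⟨a, inv.reachable a (hz.subset_outer hz.top_mem), hacc,
        NGraph.C_subset_of_reflTransGen has (NGraph.C_subset_of_edge hss' hw),
        (TransGen.tail' has hss').trans_left hs'a⟩
  · rcases innerActive_cons.1 hr with ⟨_, ⟨⟩⟩ | hr
    · exact .inr (.inl (hCs.trans Set.subset_union_right))
    · exact .inl hr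

lemma callOuter (inv : Invariant G F O I St (.callOuter s :: k)) :
    Invariant G F (insert s O) I (insert s St) (.outer s (G.succ s) :: k) := by
  obtain ⟨top, hz, hsO, hsSt, hedge, hinit⟩ := inv.shaped.callOuter_inv
  have hsF : s ∈ I → G.C s ⊆ F := fun hs => (inv.outer_of_inner s hs).resolve_left hsO
  refine
  { shaped := .outer (.cons s _ [] none hz.visit hedge (Set.mem_insert _ _) hsSt (by simp)
      (by simp [OuterHandled]))
    reachable := Set.forall_mem_insert.2 ⟨?_, inv.reachable⟩
    init_mem := ?_
    succ_of_finished := fun x hx hxSt s' hs' => ?_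
    inner_of_finished := fun x hx hxSt hacc => ?_
    outer_of_inner := fun r hr => (inv.outer_of_inner r hr).imp_left (Set.mem_insert_of_mem _)
    seed_of_inner := fun r hr hrSt => ?_
    inner_closed := fun r hr hna => ?_
    found_sound := inv.found_sound
    acc_cycle := fun v a hacc hva hcyc => ?_ }
  · cases top with
    | none => exact hinit rfl ▸ .refl
    | some t => exact (inv.reachable t (hz.subset_outer hz.top_mem)).tail (hedge t rfl)
  · rcases inv.init_mem with h | h
    · exact .inl (Set.mem_insert_of_mem _ h)
    rcases List.mem_cons.1 h with h | h
    · exact .inl (NFrame.callOuter.inj h ▸ Set.mem_insert _ _)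
    · exact .inr (List.mem_cons_of_mem _ h)
  · simp only [Set.mem_insert_iff, not_or] at hx hxSt
    exact (inv.succ_of_finished x (hx.resolve_left hxSt.1) hxSt.2 s' hs').imp_left
      (Set.mem_insert_of_mem _)
  · simp only [Set.mem_insert_iff, not_or] at hx hxSt
    exact inv.inner_of_finished x (hx.resolve_left hxSt.1) hxSt.2 hacc
  · rcases hrSt with rfl | hrSt
    · exact .inl (hsF hr)
    · exact (inv.seed_of_inner r hr hrSt).imp_right (by simp)
  · refine (inv.inner_closed r hr (by simpa using hna)).imp_right fun h s' hs' => ?_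
    by_cases hs's : s' = s
    · subst hs's
      exact .inl ((h s' hs').elim id fun h' => hsF h'.1)
    · exact (h s' hs').imp_right fun h' => ⟨h'.1, by simp [hs's, h'.2]⟩
  · rcases inv.acc_cycle v a hacc hva hcyc with h | ⟨haI, ha⟩ | h
    · exact .inl h
    · by_cases has : a = s
      · exact .inr (.inl ⟨haI, .inr (has ▸ Set.mem_insert _ _)⟩)
      · exact .inr (.inl ⟨haI, by simpa [has] using ha⟩)
    · exact .inr (.inr (by simpa using h))

/-- Leaving `OuterDFS(s)` once its nested search (if any) has finished. -/
lemma finishOuter {f : NFrame S} (inv : Invariant G F O I St (f :: k))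
    (hf : f = .outer s [] ∨ f = .outerPop s)
    (hz : OuterZone G F O (.outer s [] :: k) (some s) St none)
    (hseed : G.acc s → G.C s ⊆ F ∨ s ∈ I)
    (hdetect : ∀ v, G.acc s → v ∈ G.C s → TransGen (Edge G) s s → v ∈ F) :
    Invariant G F O I (St \ {s}) k := by
  have hsucc := hz.handled_succ
  have hinit : .callOuter G.init ∈ f :: k → .callOuter G.init ∈ k := by
    rcases hf with rfl | rfl <;> simp
  have hpop : ∀ b, b ≠ s → .outerPop b ∈ f :: k → .outerPop b ∈ k := by
    rcases hf with rfl | rfl <;> simp +contextual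
  cases hz with
  | cons _ _ _ _ hz' _ _ hns =>
  rw [Set.insert_sdiff_self_of_notMem hns]
  refine
  { shaped := .outer hz'
    reachable := inv.reachable
    init_mem := inv.init_mem.imp_right hinit
    succ_of_finished := fun x hx hxSt s' hs' => ?_
    inner_of_finished := fun x hx hxSt hacc => ?_
    outer_of_inner := inv.outer_of_inner
    seed_of_inner := fun r hr hrSt => (inv.seed_of_inner r hr (.inr hrSt)).imp_right
      (hpop r fun hrs => hns (hrs ▸ hrSt))
    inner_closed := fun r hr hna => ?_
    found_sound := inv.found_sound
    acc_cycle := fun v a hacc hva hcyc => ?_ }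
  · by_cases hxs : x = s
    · exact (hsucc s' (hxs ▸ hs')).resolve_right (by simp)
    · exact inv.succ_of_finished x hx (by simp [hxs, hxSt]) s' hs'
  · by_cases hxs : x = s
    · exact hxs ▸ hseed (hxs ▸ hacc)
    · exact inv.inner_of_finished x hx (by simp [hxs, hxSt]) hacc
  · have hna' : ¬ InnerActive (f :: k) r := by rcases hf with rfl | rfl <;> simpa using hna
    exact (inv.inner_closed r hr hna').imp_right fun h s' hs' =>
      (h s' hs').imp_right fun h' => ⟨h'.1, fun h'' => h'.2 (.inr h'')⟩
  · by_cases has : a = s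
    · exact .inl (hdetect v (has ▸ hacc) (has ▸ hva) (has ▸ hcyc))
    rcases inv.acc_cycle v a hacc hva hcyc with h | ⟨haI, ha⟩ | h
    · exact .inl h
    · exact .inr (.inl ⟨haI, by simpa [has] using ha⟩)
    · exact .inr (.inr (hpop a has h))

lemma outerDone (inv : Invariant G F O I St (.outer s [] :: k))
    (hs : ¬ (G.acc s ∧ ¬ G.C s ⊆ F)) : Invariant G F O I (St \ {s}) k := by
  have hsF : G.acc s → G.C s ⊆ F := fun hacc => by_contra fun hF => hs ⟨hacc, hF⟩
  exact inv.finishOuter (.inl rfl) inv.shaped.outer_inv (fun hacc => .inl (hsF hacc))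
    fun v hacc hv _ => hsF hacc hv

lemma outerPop (inv : Invariant G F O I St (.outerPop s :: k)) :
    Invariant G F O I (St \ {s}) k := by
  obtain ⟨hz, -, hsI⟩ := inv.shaped.outerPop_inv
  have hclosed : ∀ r ∈ I, InnerClosed G F I St r := fun r hr =>
    inv.inner_closed r hr (by simpa using hz.not_innerActive r)
  exact inv.finishOuter (.inr rfl) hz (fun _ => .inr hsI) fun v _ hv hcyc =>
    mem_of_transGen_self_of_innerClosed hclosed hsI hz.top_mem hv hcyc

lemma callInner_of_shaped (inv : Invariant G F O I St (.callInner t :: k))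
    (hshaped : Shaped G F O (insert t I) St (.inner t (G.succ t) :: k))
    (htO : t ∈ O ∨ G.C t ⊆ F) (htSt : t ∈ St → .outerPop t ∈ k) :
    Invariant G F O (insert t I) St (.inner t (G.succ t) :: k) where
  shaped := hshaped
  reachable := inv.reachable
  init_mem := inv.init_mem.imp_right (by simp)
  succ_of_finished := inv.succ_of_finished
  inner_of_finished x hx hxSt hacc :=
    (inv.inner_of_finished x hx hxSt hacc).imp_right (Set.mem_insert_of_mem _)
  outer_of_inner := Set.forall_mem_insert.2 ⟨htO, inv.outer_of_inner⟩
  seed_of_inner r hr hrSt := by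
    rcases hr with rfl | hr
    · exact .inr (List.mem_cons_of_mem _ (htSt hrSt))
    · exact (inv.seed_of_inner r hr hrSt).imp_right (by simp)
  inner_closed r hr hna := by
    rcases hr with rfl | hr
    · simp at hna
    · refine (inv.inner_closed r hr ?_).mono subset_rfl (Set.subset_insert _ _)
      simp only [innerActive_cons, not_or] at hna ⊢
      exact ⟨by simp, hna.2⟩
  found_sound := inv.found_sound
  acc_cycle v a hacc hva hcyc := by
    rcases inv.acc_cycle v a hacc hva hcyc with h | ⟨haI, ha⟩ | h
    · exact .inl h
    · by_cases hat : a = t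
      · subst hat
        rcases ha with haO | haSt
        · exact .inl (htO.resolve_left haO hva)
        · exact .inr (.inr (List.mem_cons_of_mem _ (htSt haSt)))
      · exact .inr (.inl ⟨by simp [hat, haI], ha⟩)
    · exact .inr (.inr (by simpa using h))

lemma callInner (inv : Invariant G F O I St (.callInner t :: k)) :
    Invariant G F O (insert t I) St (.inner t (G.succ t) :: k) := by
  rcases inv.shaped.callInner_inv with
    ⟨k', rfl, hz, hacc, -⟩ | ⟨a, iz, t', k', rfl, hz, hacc, ha, hiz, hedge, -, htSt, htO⟩
  · exact inv.callInner_of_shaped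
      (.inner t hz hacc (Set.mem_insert _ _) (.seed _ [] none (by simp) (by simp [InnerHandled])))
      (.inl (hz.subset_outer hz.top_mem)) fun _ => List.mem_cons_self ..
  · exact inv.callInner_of_shaped
      (.inner a hz hacc (Set.mem_insert_of_mem _ ha)
        (.cons t _ [] none (hiz.visit htSt) hedge (Set.mem_insert _ _) (by simp)
          (by simp [InnerHandled])))
      htO (absurd · htSt)

lemma mem_found_iff (inv : Invariant G F O I St []) (v : V) : v ∈ F ↔ NGraph.AccLasso G v := by
  refine ⟨inv.found_sound v, fun ⟨a, hreach, hacc, hva, hcyc⟩ => by_contra fun hvF => ?_⟩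
  have hSt := inv.shaped.stack_eq_empty
  subst hSt
  have hinit : G.init ∈ O := by simpa using inv.init_mem
  -- states on a path to `a` are never pruned for `v`, so the path stays inside `O`
  have haO : ∀ x, ReflTransGen (Edge G) x a → x ∈ O → a ∈ O := by
    intro x hxa
    induction hxa using ReflTransGen.head_induction_on with
    | refl => exact id
    | head hxy hya ih =>
      exact fun hx => ih ((inv.succ_of_finished _ hx id _ hxy).resolve_right
        fun hyF => hvF (hyF (NGraph.C_subset_of_reflTransGen hya hva)))
  rcases inv.inner_of_finished a (haO _ hreach hinit) id hacc with haF | haI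
  · exact hvF (haF hva)
  · rcases inv.acc_cycle v a hacc hva hcyc with h | ⟨h, -⟩ | h
    exacts [hvF h, h haI, by simp at h]

end Invariant

lemma invariant_of_step {c c' : NConfig S V} (h : NStep G c c')
    (inv : Invariant G c.found c.outer c.inner c.stack c.ctrl) :
    Invariant G c'.found c'.outer c'.inner c'.stack c'.ctrl := by
  cases h with
  | callOuter => exact inv.callOuter
  | outerSkip _ _ _ _ _ _ _ _ h => exact inv.outerSkip h
  | outerRec _ _ _ _ _ _ _ _ hO hSt => exact inv.outerRec hO hSt
  | outerAcc _ _ _ _ _ _ hacc hF => exact inv.outerAcc hacc hF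
  | outerDone _ _ _ _ _ _ h => exact inv.outerDone h
  | outerPop => exact inv.outerPop
  | callInner => exact inv.callInner
  | innerFound _ _ _ _ _ _ _ _ h => exact inv.innerFound h
  | innerRec _ _ _ _ _ _ _ _ hSt hI => exact inv.innerRec hSt hI
  | innerSkip _ _ _ _ _ _ _ _ hSt h => exact inv.innerSkip hSt h
  | innerDone => exact inv.innerDone

lemma invariant_of_run {c : NConfig S V} (h : ReflTransGen (NStep G) (initConfig G) c) :
    Invariant G c.found c.outer c.inner c.stack c.ctrl := by
  induction h with
  | refl => exact Invariant.initial
  | tail _ h ih => exact invariant_of_step h ih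

end CumulativeNDFS

theorem cumulative_ndfs_correct_on_abstraction_general
    (A : PTBA L n P) (lb ub : P → ℤ) (α : Abstr L n P)
    (hfin : (AbsStates A lb ub α).Finite)
    (G : NGraph (Option (SymState L n P)) (P → ℤ))
    (hinit : G.init = none)
    (hsucc0 : ∀ Q, some Q ∈ G.succ none ↔ Q ∈ AbsInit A lb ub α)
    (hsucc : ∀ Q Q', some Q' ∈ G.succ (some Q) ↔ AbsStep A α Q Q')
    (hnone : ∀ s, none ∉ G.succ s)
    (hacc : ∀ Q, G.acc (some Q) ↔ Q.1 ∈ A.F)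
    (hC : ∀ Q, G.C (some Q) = csem Q.2.1)
    (v : P → ℤ) (c : NConfig (Option (SymState L n P)) (P → ℤ))
    (hrun : ReflTransGen (NStep G) (initConfig G) c) (hfinal : c.ctrl = []) :
    v ∈ c.found ↔ AbsAccRun A lb ub α v := by
  have hG : IsRootedGraphOf G (AbsInit A lb ub α) (AbsStep A α) (·.1 ∈ A.F) (csem ·.2.1) :=
    ⟨hinit, hsucc0, hsucc, hnone, hacc, hC⟩
  have inv := invariant_of_run hrun
  rw [hfinal] at inv
  rw [inv.mem_found_iff, NGraph.accLasso_iff_accRun (hG.reachable_finite hfin), hG.accRun_iff]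
  rfl

/-- A parameter valuation `v` is contained in the set `Accepted`
returned by the Cumulative NDFS algorithm run on (the graph of) the finite induced
transition system `⟦A⟧^α` if and only if there exists an accepting run respecting `v`
in `⟦A⟧^α`. -/
theorem cumulative_ndfs_correct_on_abstraction
    (A : PTBA L n P) (lb ub : P → ℤ) (α : Abstr L n P)
    (hα : IsAbstraction A α)
    (hfin : (AbsStates A lb ub α).Finite)
    (G : NGraph (Option (SymState L n P)) (P → ℤ))
    (hinit : G.init = none)
    (hsucc0 : ∀ Q, some Q ∈ G.succ none ↔ Q ∈ AbsInit A lb ub α)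
    (hsucc : ∀ Q Q', some Q' ∈ G.succ (some Q) ↔ AbsStep A α Q Q')
    (hnone : ∀ s, none ∉ G.succ s)
    (hacc : ∀ Q, G.acc (some Q) ↔ Q.1 ∈ A.F)
    (hacc0 : ¬ G.acc none)
    (hC : ∀ Q, G.C (some Q) = csem Q.2.1)
    (hC0 : G.C none = Set.univ)
    (v : P → ℤ) (c : NConfig (Option (SymState L n P)) (P → ℤ))
    (hrun : ReflTransGen (NStep G) (initConfig G) c) (hfinal : c.ctrl = []) :
    v ∈ c.found ↔ AbsAccRun A lb ub α v :=
  cumulative_ndfs_correct_on_abstraction_general A lb ub α hfin G hinit hsucc0 hsucc hnone hacc hC v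
    c hrun hfinal

end PTASynth
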